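/- arXiv:math/0310220 — 2 statements merged into one kernel-verified Lean document; each statement's English description precedes it below -/
import Mathlib

section
/- Let X be a geodesic metric space, K ⊆ X closed, and suppose X∖K is a disjoint union of open sets U₁,...,U_r such that for each i, the frontier Λ_i = ∂U_i is convex in X (every geodesic with endpoints in Λ_i stays in Λ_i). Then K is convex in X: any geodesic with both endpoints in K lies in K. -/
open Set

/-- `γ` parametrizes a geodesic (distance-realizing path) on `[a,b]`. -/
def IsGeodesicOn {X : Type*} [MetricSpace X] (γ : ℝ → X) (a b : ℝ) : Prop :=
  ∀ s ∈ Set.Icc a b, ∀ t ∈ Set.Icc a b, dist (γ s) (γ t) = |s - t|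

/-- Every pair of points is joined by a geodesic. -/
def GeodesicSpace (X : Type*) [MetricSpace X] : Prop :=
  ∀ p q : X, ∃ γ : ℝ → X, γ 0 = p ∧ γ (dist p q) = q ∧ IsGeodesicOn γ 0 (dist p q)

/-- A subset is convex (totally geodesic) if every geodesic segment with
endpoints in it lies entirely in it. -/
def GeodesicConvex {X : Type*} [MetricSpace X] (A : Set X) : Prop :=
  ∀ (γ : ℝ → X) (a b : ℝ), IsGeodesicOn γ a b → γ a ∈ A → γ b ∈ A →
    ∀ t ∈ Set.Icc a b, γ t ∈ A

/-- CAT(0): a geodesic space satisfying the CN (comparison) inequality along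
every geodesic. -/
def CAT0 (X : Type*) [MetricSpace X] : Prop :=
  GeodesicSpace X ∧
  ∀ (p q r : X) (γ : ℝ → X), γ 0 = p → γ (dist p q) = q →
    IsGeodesicOn γ 0 (dist p q) → ∀ t ∈ Set.Icc (0:ℝ) 1,
      dist r (γ (t * dist p q)) ^ 2 ≤
        (1 - t) * dist r p ^ 2 + t * dist r q ^ 2 - t * (1 - t) * dist p q ^ 2

/-- `γ` is a local geodesic on the set `S` of parameters. -/
def IsLocalGeodesicOn {X : Type*} [MetricSpace X] (γ : ℝ → X) (S : Set ℝ) : Prop :=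
  ∀ t ∈ S, ∃ ε > (0:ℝ), ∀ s ∈ S ∩ Set.Icc (t - ε) (t + ε),
    ∀ u ∈ S ∩ Set.Icc (t - ε) (t + ε), dist (γ s) (γ u) = |s - u|

/-- Nonpositively curved: every point has a neighborhood (a closed ball)
which is CAT(0). -/
def NPC (X : Type*) [MetricSpace X] : Prop :=
  ∀ x : X, ∃ ε > (0:ℝ), CAT0 (Metric.closedBall x ε)

/-- Geodesically complete: every nontrivial geodesic segment extends to a
geodesic ray `[0,∞) → X` (a local geodesic on `[0,∞)`). -/
def GeodesicallyComplete (X : Type*) [MetricSpace X] : Prop :=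
  ∀ a : ℝ, 0 < a → ∀ γ : ℝ → X, IsGeodesicOn γ 0 a →
    ∃ δ : ℝ → X, (∀ t ∈ Set.Icc 0 a, δ t = γ t) ∧ IsLocalGeodesicOn δ (Set.Ici 0)

/-- Lemma 1.4 (abstract form).  Let `X` be a geodesic metric space, `K ⊆ X`
closed, and suppose `X ∖ K` is a disjoint union of open sets `U i` such that
each frontier `∂(U i)` is convex in `X`.  Then `K` is convex in `X`. -/
theorem convex_complement_of_convex_frontiers {X : Type*} [MetricSpace X]
    (hgeo : GeodesicSpace X) (K : Set X) (hK : IsClosed K)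
    (r : ℕ) (U : Fin r → Set X) (hopen : ∀ i, IsOpen (U i))
    (hdisj : Pairwise (Function.onFun Disjoint U))
    (hcover : Kᶜ = ⋃ i, U i)
    (hconv : ∀ i, GeodesicConvex (frontier (U i))) :
    GeodesicConvex K := by
  intro γ a b hγ ha hb t ht
  by_contra htK
  have htU : γ t ∈ ⋃ i, U i := by rw [← hcover]; exact htK
  obtain ⟨i, hti⟩ := mem_iUnion.mp htU
  have hcont : ContinuousOn γ (Icc a b) := by
    apply LipschitzOnWith.continuousOn (K := 1)
    apply LipschitzOnWith.of_dist_le_mul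
    intro x hx y hy
    rw [hγ x hx y hy, Real.dist_eq]
    simp
  set S : Set ℝ := Icc a b ∩ γ ⁻¹' closure (U i) with hSdef
  have hSclosed : IsClosed S :=
    hcont.preimage_isClosed_of_isClosed isClosed_Icc isClosed_closure
  have htS : t ∈ S := ⟨ht, subset_closure hti⟩
  have hSne : S.Nonempty := ⟨t, htS⟩
  have hbddb : BddBelow S := ⟨a, fun x hx => hx.1.1⟩
  have hbdda : BddAbove S := ⟨b, fun x hx => hx.1.2⟩
  set c := sInf S with hcdef
  set d := sSup S with hddef
  have hcS : c ∈ S := hSclosed.csInf_mem hSne hbddb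
  have hdS : d ∈ S := hSclosed.csSup_mem hSne hbdda
  have hct : c ≤ t := csInf_le hbddb htS
  have htd : t ≤ d := le_csSup hbdda htS
  have hUK : U i ⊆ Kᶜ := by rw [hcover]; exact subset_iUnion U i
  have hcU : γ c ∉ U i := by
    intro hcUi
    have hac : a < c := by
      rcases lt_or_eq_of_le hcS.1.1 with h | h
      · exact h
      · exact absurd (h ▸ ha) (hUK hcUi)
    have hmem : γ ⁻¹' (U i) ∈ nhdsWithin c (Icc a b) :=
      (hcont c hcS.1) ((hopen i).mem_nhds hcUi)
    have hsub : Ico a c ⊆ Icc a b := fun x hx => ⟨hx.1, le_trans hx.2.le hcS.1.2⟩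
    have hmem2 : γ ⁻¹' (U i) ∈ nhdsWithin c (Ico a c) := nhdsWithin_mono c hsub hmem
    have hnb : (nhdsWithin c (Ico a c)).NeBot := by
      rw [← mem_closure_iff_nhdsWithin_neBot, closure_Ico hac.ne]
      exact ⟨hac.le, le_refl c⟩
    obtain ⟨s, hs1, hs2⟩ := Filter.nonempty_of_mem (Filter.inter_mem hmem2 self_mem_nhdsWithin)
    have hsS : s ∈ S := ⟨hsub hs2, subset_closure hs1⟩
    exact absurd (csInf_le hbddb hsS) (not_le.mpr hs2.2)
  have hdU : γ d ∉ U i := by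
    intro hdUi
    have hdb : d < b := by
      rcases lt_or_eq_of_le hdS.1.2 with h | h
      · exact h
      · exact absurd (h ▸ hb) (hUK hdUi)
    have hmem : γ ⁻¹' (U i) ∈ nhdsWithin d (Icc a b) :=
      (hcont d hdS.1) ((hopen i).mem_nhds hdUi)
    have hsub : Ioc d b ⊆ Icc a b := fun x hx => ⟨le_trans hdS.1.1 hx.1.le, hx.2⟩
    have hmem2 : γ ⁻¹' (U i) ∈ nhdsWithin d (Ioc d b) := nhdsWithin_mono d hsub hmem
    have hnb : (nhdsWithin d (Ioc d b)).NeBot := by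
      rw [← mem_closure_iff_nhdsWithin_neBot, closure_Ioc hdb.ne]
      exact ⟨le_refl d, hdb.le⟩
    obtain ⟨s, hs1, hs2⟩ := Filter.nonempty_of_mem (Filter.inter_mem hmem2 self_mem_nhdsWithin)
    have hsS : s ∈ S := ⟨hsub hs2, subset_closure hs1⟩
    exact absurd (le_csSup hbdda hsS) (not_le.mpr hs2.1)
  have hfr : frontier (U i) = closure (U i) \ U i := (hopen i).frontier_eq
  have hcfr : γ c ∈ frontier (U i) := by rw [hfr]; exact ⟨hcS.2, hcU⟩
  have hdfr : γ d ∈ frontier (U i) := by rw [hfr]; exact ⟨hdS.2, hdU⟩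
  have hres : IsGeodesicOn γ c d := fun s hs u hu =>
    hγ s (Icc_subset_Icc hcS.1.1 hdS.1.2 hs) u (Icc_subset_Icc hcS.1.1 hdS.1.2 hu)
  have := hconv i γ c d hres hcfr hdfr t ⟨hct, htd⟩
  rw [hfr] at this
  exact this.2 hti
end

section
/- Every finite simplicial complex Z is homotopy equivalent to a finite simplicial complex Y with no free faces such that π₁(Y) ≅ π₁(Z) * F_N for some N ≥ 0, where F_N is the free group on N generators. (Homotopy-theoretic content of Proposition 4.) -/
/-!
If `s` is a free face, the only faces containing `s` are `s` and one simplex `t = s ∪ {v}`, and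
removing both is a deformation retraction. In barycentric coordinates of `t`, moving a point of
`t` by `ρ • ∑_{y ∈ s} (v - y)` lowers each coordinate along `s` by `ρ` and raises the one at `v`
by `ρ · #s`; taking `ρ` to be the smallest coordinate along `s` pushes `t` onto the faces
`t \ {y}`, `y ∈ s`, while points of `t` on the other faces, whose coordinate at some `y ∈ s`
vanishes, stay put. Collapsing free faces until none is left gives a homotopy equivalent `Y`, so
`π₁(Y) ≅ π₁(Z) ≅ π₁(Z) ∗ F₀`.
-/

open Set Finset
open scoped ContinuousMap

/-- `s` is a free face of the simplicial complex `K`: it is a face of exactly one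
simplex of one dimension higher. -/
def IsFreeFace {m : ℕ} (K : Geometry.SimplicialComplex ℝ (Fin m → ℝ))
    (s : Finset (Fin m → ℝ)) : Prop :=
  s ∈ K.faces ∧ ∃! t, t ∈ K.faces ∧ s ⊆ t ∧ t.card = s.card + 1

namespace ContinuousMap.HomotopyEquiv

variable {E : Type*} [TopologicalSpace E] [AddCommGroup E] [Module ℝ E]
  [IsTopologicalAddGroup E] [ContinuousSMul ℝ E]

noncomputable def ofRetractionAlongSegments {X A : Set E} (hAX : A ⊆ X) (r : E → E)
    (hr : ContinuousOn r X) (hrA : MapsTo r X A) (hr_fix : EqOn r id A)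
    (hseg : ∀ x ∈ X, segment ℝ (r x) x ⊆ X) : X ≃ₕ A where
  toFun := ⟨_, hr.mapsToRestrict hrA⟩
  invFun := ContinuousMap.inclusion hAX
  left_inv := ⟨{
    toFun := fun p => ⟨AffineMap.lineMap (r p.2) (p.2 : E) (p.1 : ℝ),
      hseg _ p.2.2 (segment_eq_image_lineMap ℝ (r p.2) (p.2 : E) ▸ mem_image_of_mem _ p.1.2)⟩
    continuous_toFun := by
      refine Continuous.subtype_mk (Continuous.lineMap ?_ ?_ ?_) _
      · exact hr.domRestrict.comp continuous_snd
      · exact continuous_subtype_val.comp continuous_snd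
      · exact continuous_subtype_val.comp continuous_fst
    map_zero_left := fun x => by ext; simp; rfl
    map_one_left := fun x => by ext; simp }⟩
  right_inv := by
    convert ContinuousMap.Homotopic.refl _
    ext x
    exact (hr_fix x.2).symm

noncomputable def unionOfRetractionOfConvex {A C : Set E} (hA : IsClosed A) (hC : IsClosed C)
    (hCconv : Convex ℝ C) (f : E → E) (hf : ContinuousOn f C) (hfC : MapsTo f C (A ∩ C))
    (hf_fix : EqOn f id (A ∩ C)) : ↥(A ∪ C) ≃ₕ A := by
  classical
  have hfix : EqOn (C.piecewise f id) id A := fun x hxA => by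
    by_cases hxC : x ∈ C
    · rw [piecewise_eq_of_mem _ _ _ hxC, hf_fix ⟨hxA, hxC⟩]
    · rw [piecewise_eq_of_notMem _ _ _ hxC]
  refine ofRetractionAlongSegments subset_union_left (C.piecewise f id) ?_ ?_ hfix ?_
  · exact (continuousOn_id.congr hfix).union_of_isClosed
      (hf.congr fun x hx => piecewise_eq_of_mem _ _ _ hx) hA hC
  · intro x hx
    by_cases hxC : x ∈ C
    · rw [piecewise_eq_of_mem _ _ _ hxC]
      exact (hfC hxC).1
    · rw [piecewise_eq_of_notMem _ _ _ hxC]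
      exact hx.resolve_right hxC
  · intro x hx
    by_cases hxC : x ∈ C
    · rw [piecewise_eq_of_mem _ _ _ hxC]
      exact (hCconv.segment_subset (hfC hxC).2 hxC).trans subset_union_right
    · rw [piecewise_eq_of_notMem _ _ _ hxC, id_eq, segment_same]
      exact singleton_subset_iff.2 hx

end ContinuousMap.HomotopyEquiv

theorem AffineIndependent.exists_affineBasis_superset {k E : Type*} [Field k] [AddCommGroup E]
    [Module k E] [FiniteDimensional k E] {t : Set E} (ht : AffineIndependent k ((↑) : t → E)) :
    ∃ (P : Set E) (B : AffineBasis P k E), t ⊆ P ∧ P.Finite ∧ ⇑B = Subtype.val := by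
  obtain ⟨P, htP, hPind, hPspan⟩ := exists_subset_affineIndependent_affineSpan_eq_top ht
  exact ⟨P, ⟨_, hPind, by rwa [Subtype.range_coe]⟩, htP,
    finite_set_of_fin_dim_affineIndependent k hPind, rfl⟩

namespace AffineBasis

variable {𝕜 ι E : Type*} [Field 𝕜] [AddCommGroup E] [Module 𝕜 E] (B : AffineBasis ι 𝕜 E)

def collapseDir (S : Finset ι) (v : ι) : E := ∑ j ∈ S, (B v -ᵥ B j)

theorem coord_add_smul_collapseDir [DecidableEq ι] (S : Finset ι) (v i : ι) (x : E) (ρ : 𝕜) :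
    B.coord i (x + ρ • B.collapseDir S v) =
      B.coord i x + ρ * ((if i = v then (#S : 𝕜) else 0) - if i ∈ S then 1 else 0) := by
  rw [add_comm, ← vadd_eq_add, AffineMap.map_vadd, map_smul, collapseDir, map_sum]
  simp only [AffineMap.linearMap_vsub]
  simp only [coord_apply, vsub_eq_sub, vadd_eq_add, smul_eq_mul,
    sum_sub_distrib, sum_ite_eq, sum_const, nsmul_eq_mul]
  split_ifs <;> ring

variable [LinearOrder 𝕜] [IsStrictOrderedRing 𝕜]

theorem mem_convexHull_image_iff [Finite ι] {U : Set ι} {x : E} :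
    x ∈ convexHull 𝕜 (B '' U) ↔ (∀ i, 0 ≤ B.coord i x) ∧ ∀ i ∉ U, B.coord i x = 0 := by
  classical
  have := Fintype.ofFinite ι
  constructor
  · intro hx
    refine ⟨?_, fun i hi => ?_⟩
    · have hx' := convexHull_mono (image_subset_range B U) hx
      rwa [B.convexHull_eq_nonneg_coord] at hx'
    · refine convexHull_min ?_ ((convex_singleton 0).affine_preimage (B.coord i)) hx
      rintro _ ⟨j, hj, rfl⟩
      exact B.coord_apply_ne (ne_of_mem_of_not_mem hj hi).symm
  · rintro ⟨hnonneg, hzero⟩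
    have hsum : ∑ i, B.coord i x = 1 := B.sum_coord_apply_eq_one x
    have hx : univ.centerMass (B.coord · x) B = x := by
      rw [← affineCombination_eq_centerMass hsum]
      exact B.affineCombination_coord_eq_self x
    rw [← hx, ← centerMass_filter_ne_zero]
    refine centerMass_mem_convexHull _ (fun i _ => hnonneg i) ?_ fun i hi => ?_
    · rw [sum_filter_ne_zero, hsum]
      exact one_pos
    · refine mem_image_of_mem B (not_not.1 fun hiU => ?_)
      exact (Finset.mem_filter.1 hi).2 (hzero i hiU)

theorem mem_convexHull_iff_of_coe_eq_val {P : Set E} [Finite P] (B : AffineBasis P 𝕜 E)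
    (hB : ⇑B = Subtype.val) {u : Finset E} (hu : ↑u ⊆ P) {x : E} :
    x ∈ convexHull 𝕜 ↑u ↔ (∀ i, 0 ≤ B.coord i x) ∧ ∀ i : P, ↑i ∉ u → B.coord i x = 0 := by
  have h := B.mem_convexHull_image_iff (U := Subtype.val ⁻¹' ↑u) (x := x)
  rwa [hB, Subtype.image_preimage_coe, inter_eq_right.2 hu] at h

theorem add_smul_collapseDir_mem_convexHull_diff [Finite ι] {S : Finset ι} {T : Set ι}
    {v j₀ : ι} (hv : v ∉ S) (hvT : v ∈ T) (hST : ↑S ⊆ T) {x : E} (hx : x ∈ convexHull 𝕜 (B '' T))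
    (hj₀ : j₀ ∈ S) (hmin : ∀ j ∈ S, B.coord j₀ x ≤ B.coord j x) :
    x + B.coord j₀ x • B.collapseDir S v ∈ convexHull 𝕜 (B '' (T \ {j₀})) := by
  classical
  rw [mem_convexHull_image_iff] at hx ⊢
  obtain ⟨hnonneg, hzero⟩ := hx
  simp only [coord_add_smul_collapseDir]
  refine ⟨fun i => ?_, fun i hi => ?_⟩
  · by_cases hiv : i = v
    · subst hiv
      simp only [if_neg hv, sub_zero]
      exact add_nonneg (hnonneg i) (mul_nonneg (hnonneg j₀) (Nat.cast_nonneg _))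
    · by_cases hiS : i ∈ S
      · simp only [if_neg hiv, if_pos hiS]
        linarith [hmin i hiS]
      · simp [hiv, hiS, hnonneg i]
  · by_cases hij₀ : i = j₀
    · subst hij₀
      simp [ne_of_mem_of_not_mem hj₀ hv, hj₀]
    · have hiT : i ∉ T := fun h => hi ⟨h, hij₀⟩
      have hiS : i ∉ S := fun h => hiT (hST h)
      have hiv : i ≠ v := (ne_of_mem_of_not_mem hvT hiT).symm
      simp [hiv, hiS, hzero i hiT]

theorem add_smul_collapseDir_mem_convexHull_erase [DecidableEq E] {P : Set E} [Finite P]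
    [DecidablePred (· ∈ P)] (B : AffineBasis P 𝕜 E) (hB : ⇑B = Subtype.val) {s : Finset E}
    {v : E} (hv : v ∉ s) (htP : ↑(insert v s) ⊆ P) {x : E}
    (hx : x ∈ convexHull 𝕜 ↑(insert v s)) {j₀ : P} (hj₀ : j₀ ∈ s.subtype (· ∈ P))
    (hmin : ∀ j ∈ s.subtype (· ∈ P), B.coord j₀ x ≤ B.coord j x) :
    x + B.coord j₀ x • B.collapseDir (s.subtype (· ∈ P)) ⟨v, htP (mem_insert_self v s)⟩ ∈
      convexHull 𝕜 ↑((insert v s).erase ↑j₀) := by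
  have hxT : x ∈ convexHull 𝕜 (B '' (Subtype.val ⁻¹' ↑(insert v s))) := by
    rwa [hB, Subtype.image_preimage_coe, inter_eq_right.2 htP]
  have hST : (↑(s.subtype (· ∈ P)) : Set P) ⊆ Subtype.val ⁻¹' (↑(insert v s) : Set E) :=
    fun j hj => mem_insert_of_mem (mem_subtype.1 hj)
  have hmem := B.add_smul_collapseDir_mem_convexHull_diff
    (v := ⟨v, htP (mem_insert_self v s)⟩) (mt mem_subtype.1 hv) (mem_insert_self v s) hST
    hxT hj₀ hmin
  rwa [hB, image_sdiff Subtype.val_injective, Subtype.image_preimage_coe,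
    inter_eq_right.2 htP, image_singleton, ← coe_erase] at hmem

end AffineBasis

namespace Geometry.SimplicialComplex

section Star

variable {𝕜 E : Type*} [Ring 𝕜] [PartialOrder 𝕜] [AddCommGroup E] [Module 𝕜 E]
  (K : SimplicialComplex 𝕜 E) (s : Finset E)

def eraseStar : SimplicialComplex 𝕜 E where
  faces := {u ∈ K.faces | ¬s ⊆ u}
  indep hu := K.indep hu.1
  isRelLowerSet_faces := fun _ hu =>
    ⟨K.nonempty_of_mem_faces hu.1, fun _ hwu hw =>
      ⟨K.down_closed hu.1 hwu hw, fun hsw => hu.2 (hsw.trans hwu)⟩⟩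
  inter_subset_convexHull hu hw := K.inter_subset_convexHull hu.1 hw.1

theorem eraseStar_faces_subset : (K.eraseStar s).faces ⊆ K.faces := fun _ hu => hu.1

theorem space_eq_eraseStar_space_union {t : Finset E} (ht : t ∈ K.faces)
    (hstar : ∀ u ∈ K.faces, s ⊆ u → u ⊆ t) :
    K.space = (K.eraseStar s).space ∪ convexHull 𝕜 ↑t := by
  refine Subset.antisymm (fun x hx => ?_) (union_subset ?_ (K.convexHull_subset_space ht))
  · obtain ⟨u, hu, hxu⟩ := mem_space_iff.1 hx
    by_cases hsu : s ⊆ u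
    · exact Or.inr (convexHull_mono (mod_cast hstar u hu hsu) hxu)
    · exact Or.inl (mem_space_iff.2 ⟨u, ⟨hu, hsu⟩, hxu⟩)
  · intro x hx
    obtain ⟨u, hu, hxu⟩ := mem_space_iff.1 hx
    exact mem_space_iff.2 ⟨u, hu.1, hxu⟩

end Star

variable {E : Type*} [NormedAddCommGroup E] [NormedSpace ℝ E]

theorem isClosed_space {K : SimplicialComplex ℝ E} (hfin : K.faces.Finite) : IsClosed K.space :=
  hfin.isClosed_biUnion fun u _ => u.finite_toSet.isClosed_convexHull (𝕜 := ℝ)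

variable [FiniteDimensional ℝ E] [DecidableEq E]

theorem exists_retraction_convexHull_insert (K : SimplicialComplex ℝ E) {s : Finset E} {v : E}
    (hs : s.Nonempty) (hv : v ∉ s) (ht : insert v s ∈ K.faces) :
    ∃ f : E → E, Continuous f ∧
      MapsTo f (convexHull ℝ ↑(insert v s))
        ((K.eraseStar s).space ∩ convexHull ℝ ↑(insert v s)) ∧
      EqOn f id ((K.eraseStar s).space ∩ convexHull ℝ ↑(insert v s)) := by
  classical
  set t := insert v s
  obtain ⟨P, B, htP, hP, hB⟩ := (K.indep ht).exists_affineBasis_superset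
  have := hP.to_subtype
  set S : Finset P := s.subtype (· ∈ P)
  have hS : S.Nonempty :=
    let ⟨y, hy⟩ := hs
    ⟨⟨y, htP (mem_insert_of_mem hy)⟩, mem_subtype.2 hy⟩
  let μ : E → ℝ := fun x => S.inf' hS (B.coord · x)
  refine ⟨fun x => x + μ x • B.collapseDir S ⟨v, htP (mem_insert_self v s)⟩, ?_, ?_, ?_⟩
  · exact continuous_id.add ((Continuous.finset_inf'_apply hS fun i _ =>
      continuous_barycentric_coord B i).smul continuous_const)
  · intro x hx
    obtain ⟨j₀, hj₀, hμ⟩ := exists_mem_eq_inf' hS (B.coord · x)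
    have hj₀s : ↑j₀ ∈ s := mem_subtype.1 hj₀
    have hmem := B.add_smul_collapseDir_mem_convexHull_erase hB hv htP hx hj₀ fun j hj => by
      rw [← hμ]
      exact inf'_le _ hj
    have hface : t.erase ↑j₀ ∈ (K.eraseStar s).faces :=
      ⟨K.down_closed ht (erase_subset _ _)
          ⟨v, mem_erase.2 ⟨(ne_of_mem_of_not_mem hj₀s hv).symm, mem_insert_self v s⟩⟩,
        fun h => Finset.notMem_erase _ t (h hj₀s)⟩
    simp only [μ, hμ]
    exact ⟨convexHull_subset_space hface hmem,
      convexHull_mono (coe_subset.2 (erase_subset _ _)) hmem⟩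
  · rintro x ⟨hxA, hxC⟩
    suffices μ x = 0 by simp [this]
    obtain ⟨u, ⟨hu, hsu⟩, hxu⟩ := mem_space_iff.1 hxA
    obtain ⟨y, hys, hyu⟩ := Finset.not_subset.1 hsu
    have hxut : x ∈ convexHull ℝ ↑(u ∩ t) := by
      rw [coe_inter]
      exact K.inter_subset_convexHull hu ht ⟨hxu, hxC⟩
    refine le_antisymm ?_ (le_inf' hS _ fun i _ =>
      ((B.mem_convexHull_iff_of_coe_eq_val hB htP).1 hxC).1 i)
    calc μ x ≤ B.coord ⟨y, htP (mem_insert_of_mem hys)⟩ x := inf'_le _ (mem_subtype.2 hys)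
      _ = 0 := ((B.mem_convexHull_iff_of_coe_eq_val hB
          ((coe_subset.2 Finset.inter_subset_right).trans htP)).1 hxut).2 _
          fun h => hyu (mem_inter.1 h).1

theorem nonempty_homotopyEquiv_eraseStar (K : SimplicialComplex ℝ E) (hfin : K.faces.Finite)
    {s : Finset E} {v : E} (hs : s.Nonempty) (hv : v ∉ s) (ht : insert v s ∈ K.faces)
    (hstar : ∀ u ∈ K.faces, s ⊆ u → u ⊆ insert v s) :
    Nonempty (K.space ≃ₕ (K.eraseStar s).space) := by
  obtain ⟨f, hf, hfC, hf_fix⟩ := K.exists_retraction_convexHull_insert hs hv ht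
  rw [K.space_eq_eraseStar_space_union s ht hstar]
  exact ⟨.unionOfRetractionOfConvex (isClosed_space (hfin.subset (K.eraseStar_faces_subset s)))
    ((finite_toSet _).isClosed_convexHull (𝕜 := ℝ)) (convex_convexHull ℝ _) f hf.continuousOn
    hfC hf_fix⟩

end Geometry.SimplicialComplex

theorem IsFreeFace.exists_star_subset_insert {m : ℕ}
    {K : Geometry.SimplicialComplex ℝ (Fin m → ℝ)} {s : Finset (Fin m → ℝ)}
    (h : IsFreeFace K s) :
    ∃ v ∉ s, insert v s ∈ K.faces ∧ ∀ u ∈ K.faces, s ⊆ u → u ⊆ insert v s := by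
  obtain ⟨-, t, ⟨ht, hst, hcard⟩, huniq⟩ := h
  obtain ⟨v, hv, rfl⟩ := exists_eq_insert_iff.2 ⟨hst, hcard.symm⟩
  refine ⟨v, hv, ht, fun u hu hsu y hyu => ?_⟩
  by_cases hys : y ∈ s
  · exact mem_insert_of_mem hys
  · rw [← huniq (insert y s) ⟨K.down_closed hu (insert_subset hyu hsu) (insert_nonempty _ _),
      subset_insert _ _, card_insert_of_notMem hys⟩]
    exact mem_insert_self y s

theorem exists_homotopyEquiv_forall_not_isFreeFace {m : ℕ}
    (K : Geometry.SimplicialComplex ℝ (Fin m → ℝ)) (hfin : K.faces.Finite) :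
    ∃ Y : Geometry.SimplicialComplex ℝ (Fin m → ℝ), Y.faces.Finite ∧ (∀ s, ¬IsFreeFace Y s) ∧
      Nonempty (K.space ≃ₕ Y.space) := by
  induction hn : K.faces.ncard using Nat.strong_induction_on generalizing K with
  | _ n ih =>
  by_cases hfree : ∃ s, IsFreeFace K s
  · obtain ⟨s, hs⟩ := hfree
    obtain ⟨v, hv, ht, hstar⟩ := hs.exists_star_subset_insert
    have hsub := K.eraseStar_faces_subset s
    have hlt : (K.eraseStar s).faces.ncard < n := hn ▸ ncard_lt_ncard
      ((Set.ssubset_iff_of_subset hsub).2 ⟨s, hs.1, fun h => h.2 subset_rfl⟩) hfin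
    obtain ⟨Y, hYfin, hYfree, ⟨e⟩⟩ := ih _ hlt (K.eraseStar s) (hfin.subset hsub) rfl
    obtain ⟨e₀⟩ :=
      K.nonempty_homotopyEquiv_eraseStar hfin (K.nonempty_of_mem_faces hs.1) hv ht hstar
    exact ⟨Y, hYfin, hYfree, ⟨e₀.trans e⟩⟩
  · exact ⟨K, hfin, not_exists.1 hfree, ⟨.refl _⟩⟩

noncomputable def ContinuousMap.HomotopyEquiv.fundamentalGroupMulEquiv {X Y : Type*}
    [TopologicalSpace X] [TopologicalSpace Y] (e : X ≃ₕ Y) (x : X) :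
    FundamentalGroup X x ≃* FundamentalGroup Y (e x) :=
  (FundamentalGroupoidFunctor.equivOfHomotopyEquiv e).fullyFaithfulFunctor.mulEquivEnd ⟨x⟩

/-- Proposition 4 (homotopy-theoretic content): every finite simplicial complex
`Z` is homotopy equivalent to a finite simplicial complex `Y` with no free faces
such that `π₁(Y) ≅ π₁(Z) ∗ F_N` for some `N ≥ 0`. -/
theorem exists_no_free_face_complex {m : ℕ}
    (Z : Geometry.SimplicialComplex ℝ (Fin m → ℝ))
    (hfin : Z.faces.Finite) (z : Z.space) :
    ∃ (m' : ℕ) (Y : Geometry.SimplicialComplex ℝ (Fin m' → ℝ)),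
      Y.faces.Finite ∧
      (∀ s, ¬ IsFreeFace Y s) ∧
      Nonempty (ContinuousMap.HomotopyEquiv Z.space Y.space) ∧
      ∃ (N : ℕ) (y : Y.space),
        Nonempty (FundamentalGroup Y.space y ≃*
          Monoid.Coprod (FundamentalGroup Z.space z) (FreeGroup (Fin N))) := by
  obtain ⟨Y, hYfin, hYfree, ⟨e⟩⟩ := exists_homotopyEquiv_forall_not_isFreeFace Z hfin
  exact ⟨m, Y, hYfin, hYfree, ⟨e⟩, 0, e z, ⟨(e.fundamentalGroupMulEquiv z).symm.trans <|
    (MulEquiv.coprodPUnit _).symm.trans <|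
      MulEquiv.coprodCongr (.refl _) (MulEquiv.ofUnique (M := PUnit.{1}))⟩⟩
end
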